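/- arXiv:1910.00678 — 2 statements merged into one kernel-verified Lean document; each statement's English description precedes it below -/
import Mathlib

section
/- Let f : ℝⁿ × ℝ → ℝ be C^{k+1} with invertible Hessian in y everywhere, and let y : ℝ → ℝⁿ be a C^k trajectory whose k-th derivative equals the implicit planning law y^{(k)} = ∇_{yy}f⁻¹ [Σ_{i=0}^{k−1} a_i ∇_y^{(i)} f − Σ_{m=1}^{k−1} C(k−1,m) ∇_{yy}^{(m)} f · y^{(k−m)} − ∇_{yt}^{(k−1)} f], where ∇_y^{(i)} f denotes the i-th total time derivative of ∇_y f(y(t),t). Then g(t) := ∇_y f(y(t),t) satisfies the k-th order linear ODE g^{(k)}(t) = Σ_{i=0}^{k−1} a_i g^{(i)}(t). -/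
/-!
Along the curve `s ↦ (y s, s)` the chain rule gives `g' = ∇_{yy}f · y' + ∇_{yt}f`. Differentiating
`k - 1` more times, with the Leibniz rule for an operator-valued function applied to a
vector-valued one, gives the gradient time differentiation formula
`g^{(k)} = ∑_{m<k} C(k-1,m) ∇_{yy}^{(m)}f · y^{(k-m)} + ∇_{yt}^{(k-1)}f`.
Its `m = 0` term is `∇_{yy}f · y^{(k)}`; substituting the planning law there, `∇_{yy}f ∇_{yy}f⁻¹ = id`
and all the other terms cancel, leaving `∑_{i<k} a_i g^{(i)}`.
-/

open Finset

section
variable {𝕜 : Type*} [NontriviallyNormedField 𝕜] {E F H : Type*} [NormedAddCommGroup E]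
  [NormedSpace 𝕜 E] [NormedAddCommGroup F] [NormedSpace 𝕜 F] [NormedAddCommGroup H]
  [NormedSpace 𝕜 H]

theorem iteratedDeriv_clm_apply_eq_sum_antidiagonal {n : ℕ} {A : 𝕜 → E →L[𝕜] F} {v : 𝕜 → E}
    (hA : ContDiff 𝕜 n A) (hv : ContDiff 𝕜 n v) (x : 𝕜) :
    iteratedDeriv n (fun s => A s (v s)) x =
      ∑ ij ∈ antidiagonal n, n.choose ij.1 • iteratedDeriv ij.1 A x (iteratedDeriv ij.2 v x) := by
  induction n generalizing A v with
  | zero => simp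
  | succ n ih =>
    have hA' : ContDiff 𝕜 n (deriv A) := hA.deriv'
    have hv' : ContDiff 𝕜 n (deriv v) := hv.deriv'
    have hderiv : deriv (fun s => A s (v s)) = fun s => deriv A s (v s) + A s (deriv v s) :=
      funext fun s => deriv_clm_apply (hA.differentiable (by simp) s)
        (hv.differentiable (by simp) s)
    rw [iteratedDeriv_succ', hderiv, iteratedDeriv_fun_add (hA'.clm_apply hv.of_succ).contDiffAt
      (hA.of_succ.clm_apply hv').contDiffAt, ih hA' hv.of_succ, ih hA.of_succ hv',
      sum_antidiagonal_choose_succ_nsmul (fun i j => iteratedDeriv i A x (iteratedDeriv j v x)),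
      add_comm]
    simp only [← iteratedDeriv_succ']
    congr 1
    refine sum_congr rfl fun ij hij => ?_
    rw [n.choose_symm_of_eq_add (mem_antidiagonal.1 hij).symm]

theorem iteratedDeriv_clm_apply {n : ℕ} {A : 𝕜 → E →L[𝕜] F} {v : 𝕜 → E}
    (hA : ContDiff 𝕜 n A) (hv : ContDiff 𝕜 n v) (x : 𝕜) :
    iteratedDeriv n (fun s => A s (v s)) x =
      ∑ i ∈ range (n + 1), n.choose i • iteratedDeriv i A x (iteratedDeriv (n - i) v x) :=
  (iteratedDeriv_clm_apply_eq_sum_antidiagonal hA hv x).trans <|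
    Nat.sum_antidiagonal_eq_sum_range_succ
      (fun i j => n.choose i • iteratedDeriv i A x (iteratedDeriv j v x)) n

theorem fderiv_comp_prodMk_left {G : E × H → F} {z : E} {t : H}
    (hG : DifferentiableAt 𝕜 G (z, t)) :
    fderiv 𝕜 (fun w => G (w, t)) z = (fderiv 𝕜 G (z, t)).comp (ContinuousLinearMap.inl 𝕜 E H) :=
  (hG.hasFDerivAt.comp z (hasFDerivAt_prodMk_left z t)).fderiv

theorem deriv_comp_prodMk_right {G : E × 𝕜 → F} {z : E} {t : 𝕜}
    (hG : DifferentiableAt 𝕜 G (z, t)) :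
    deriv (fun s => G (z, s)) t = fderiv 𝕜 G (z, t) (0, 1) :=
  (hG.hasFDerivAt.comp_hasDerivAt t ((hasDerivAt_const t z).prodMk (hasDerivAt_id t))).deriv

theorem ContDiff.fderiv_comp_prodMk_left {G : E × H → F} {n : WithTop ℕ∞}
    (hG : ContDiff 𝕜 (n + 1) G) :
    ContDiff 𝕜 n (fun p : E × H => fderiv 𝕜 (fun w => G (w, p.2)) p.1) := by
  have hdiff : Differentiable 𝕜 G := hG.differentiable (by simp)
  simp only [_root_.fderiv_comp_prodMk_left (hdiff _)]
  exact (hG.fderiv_right le_rfl).clm_comp contDiff_const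

theorem ContDiff.deriv_comp_prodMk_right {G : E × 𝕜 → F} {n : WithTop ℕ∞}
    (hG : ContDiff 𝕜 (n + 1) G) :
    ContDiff 𝕜 n (fun p : E × 𝕜 => deriv (fun s => G (p.1, s)) p.2) := by
  have hdiff : Differentiable 𝕜 G := hG.differentiable (by simp)
  simp only [_root_.deriv_comp_prodMk_right (hdiff _)]
  exact (hG.fderiv_right le_rfl).clm_apply contDiff_const

theorem deriv_comp_graph {G : E × 𝕜 → F} {y : 𝕜 → E} {t : 𝕜}
    (hG : DifferentiableAt 𝕜 G (y t, t)) (hy : DifferentiableAt 𝕜 y t) :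
    deriv (fun s => G (y s, s)) t =
      fderiv 𝕜 (fun w => G (w, t)) (y t) (deriv y t) + deriv (fun s => G (y t, s)) t := by
  have hgraph : HasDerivAt (fun s => (y s, s)) (deriv y t, 1) t :=
    hy.hasDerivAt.prodMk (hasDerivAt_id t)
  have hcomp : HasDerivAt (fun s => G (y s, s)) (fderiv 𝕜 G (y t, t) (deriv y t, 1)) t :=
    hG.hasFDerivAt.comp_hasDerivAt (f := fun s => (y s, s)) t hgraph
  rw [hcomp.deriv, fderiv_comp_prodMk_left hG,
    deriv_comp_prodMk_right hG, ContinuousLinearMap.comp_apply, ← map_add]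
  simp

theorem iteratedDeriv_succ_comp_graph {n : ℕ} {G : E × 𝕜 → F} {y : 𝕜 → E}
    (hG : ContDiff 𝕜 (n + 1) G) (hy : ContDiff 𝕜 (n + 1) y) (t : 𝕜) :
    iteratedDeriv (n + 1) (fun s => G (y s, s)) t =
      ∑ m ∈ range (n + 1), n.choose m •
          iteratedDeriv m (fun s => fderiv 𝕜 (fun w => G (w, s)) (y s)) t
            (iteratedDeriv (n + 1 - m) y t)
        + iteratedDeriv n (fun s => deriv (fun r => G (y s, r)) s) t := by
  have hgraph : ContDiff 𝕜 n (fun s => (y s, s)) := hy.of_succ.prodMk contDiff_id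
  have hD₁ : ContDiff 𝕜 n (fun s => fderiv 𝕜 (fun w => G (w, s)) (y s)) :=
    hG.fderiv_comp_prodMk_left.comp hgraph
  have hD₂ : ContDiff 𝕜 n (fun s => deriv (fun r => G (y s, r)) s) :=
    hG.deriv_comp_prodMk_right.comp hgraph
  have hderiv : deriv (fun s => G (y s, s)) = fun s =>
      fderiv 𝕜 (fun w => G (w, s)) (y s) (deriv y s) + deriv (fun r => G (y s, r)) s :=
    funext fun s => deriv_comp_graph (hG.differentiable (by simp) _)
      (hy.differentiable (by simp) s)
  rw [iteratedDeriv_succ', hderiv,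
    iteratedDeriv_fun_add (hD₁.clm_apply hy.deriv').contDiffAt hD₂.contDiffAt,
    iteratedDeriv_clm_apply hD₁ hy.deriv']
  congr 1
  refine sum_congr rfl fun m hm => ?_
  rw [← iteratedDeriv_succ', Nat.sub_add_comm (mem_range_succ_iff.mp hm)]

end

theorem ContDiff.gradient_comp_prodMk_left {E F : Type*} [NormedAddCommGroup E]
    [InnerProductSpace ℝ E] [CompleteSpace E] [NormedAddCommGroup F] [NormedSpace ℝ F]
    {f : E × F → ℝ} {n : WithTop ℕ∞} (hf : ContDiff ℝ (n + 1) f) :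
    ContDiff ℝ n (fun p : E × F => gradient (fun w => f (w, p.2)) p.1) := by
  simp only [gradient]
  exact (InnerProductSpace.toDual ℝ E).symm.contDiff.comp hf.fderiv_comp_prodMk_left

/-- Implicit trajectory planning: if the `k`-th derivative of the trajectory `y` equals the
implicit planning law
`y^{(k)} = ∇_{yy}f⁻¹ [ ∑_{i<k} a_i ∇_y^{(i)} f − ∑_{m=1}^{k−1} C(k−1,m) ∇_{yy}^{(m)} f · y^{(k−m)} − ∇_{yt}^{(k−1)} f ]`,
then the gradient `g(t) = ∇_y f(y(t),t)` satisfies the `k`-th order linear ODE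
`g^{(k)} = ∑_{i<k} a_i g^{(i)}`. -/
theorem implicit_planning_gradient_ode {n k : ℕ} (hk : 1 ≤ k) (a : ℕ → ℝ)
    (f : EuclideanSpace ℝ (Fin n) × ℝ → ℝ) (hf : ContDiff ℝ (k + 1 : ℕ) f)
    (y : ℝ → EuclideanSpace ℝ (Fin n)) (hy : ContDiff ℝ (k : ℕ) y)
    (grad : EuclideanSpace ℝ (Fin n) → ℝ → EuclideanSpace ℝ (Fin n))
    (hgrad : ∀ z t, grad z t = gradient (fun w => f (w, t)) z)
    (Hess : EuclideanSpace ℝ (Fin n) → ℝ →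
      (EuclideanSpace ℝ (Fin n) →L[ℝ] EuclideanSpace ℝ (Fin n)))
    (hHess : ∀ z t, Hess z t = fderiv ℝ (fun w => grad w t) z)
    (mixed : EuclideanSpace ℝ (Fin n) → ℝ → EuclideanSpace ℝ (Fin n))
    (hmixed : ∀ z t, mixed z t = deriv (fun s => grad z s) t)
    -- the (everywhere defined) inverse of the Hessian
    (Hinv : EuclideanSpace ℝ (Fin n) → ℝ →
      (EuclideanSpace ℝ (Fin n) →L[ℝ] EuclideanSpace ℝ (Fin n)))
    (hHinv : ∀ z t, (Hess z t).comp (Hinv z t)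
        = ContinuousLinearMap.id ℝ (EuclideanSpace ℝ (Fin n)) ∧
      (Hinv z t).comp (Hess z t) = ContinuousLinearMap.id ℝ (EuclideanSpace ℝ (Fin n)))
    -- the implicit planning law for `y^{(k)}`
    (hplan : ∀ t : ℝ, iteratedDeriv k y t =
      Hinv (y t) t
        ((∑ i ∈ Finset.range k, a i • iteratedDeriv i (fun s => grad (y s) s) t)
          - (∑ m ∈ Finset.Ico 1 k, ((k - 1).choose m : ℝ) •
              (iteratedDeriv m (fun s => Hess (y s) s) t) (iteratedDeriv (k - m) y t))
          - iteratedDeriv (k - 1) (fun s => mixed (y s) s) t)) :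
    ∀ t : ℝ, iteratedDeriv k (fun s => grad (y s) s) t
      = ∑ i ∈ Finset.range k, a i • iteratedDeriv i (fun s => grad (y s) s) t := by
  intro t
  obtain ⟨k, rfl⟩ : ∃ j, k = j + 1 := ⟨k - 1, by omega⟩
  have hG : ContDiff ℝ (k + 1) (fun p : EuclideanSpace ℝ (Fin n) × ℝ => grad p.1 p.2) := by
    simp only [hgrad]
    exact ContDiff.gradient_comp_prodMk_left (by exact_mod_cast hf)
  have hHess_Hinv : ∀ v, Hess (y t) t (Hinv (y t) t v) = v := fun v =>
    congr($((hHinv (y t) t).1) v)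
  have hformula := iteratedDeriv_succ_comp_graph hG (by exact_mod_cast hy) t
  simp only [← hHess, ← hmixed] at hformula
  simp only [Nat.add_sub_cancel, Nat.cast_smul_eq_nsmul] at hplan
  rw [hformula, sum_range_eq_add_Ico _ k.succ_pos]
  simp only [Nat.choose_zero_right, one_smul, iteratedDeriv_zero, Nat.sub_zero, hplan t,
    hHess_Hinv]
  abel
end

section
/- Let f : ℝⁿ × ℝ → ℝ be C^∞, uniformly m-strongly convex in y, with minimizing path y*(t) (i.e. ∇_y f(y*(t),t) = 0 for all t). Suppose along a trajectory y(t) the stacked gradient vector G(t) = col(g(t), ġ(t), …, g^{(k−1)}(t)) with g(t) = ∇_y f(y(t),t) evolves as Ġ = H G with H Hurwitz. Then ‖y(t) − y*(t)‖ ≤ C e^{−αt} with C = (c²/m² · Σ_{j=0}^{k−1} ‖g^{(j)}(0)‖²)^{1/2}, and 0 ≤ f(y(t),t) − f(y*(t),t) ≤ m C² e^{−2αt}, where c, α > 0 are the constants from the exponential bound ‖e^{Ht}‖ ≤ c e^{−αt}. -/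
open Finset

open NormedSpace

/-- Solution of the linear ODE `Ġ = A G`. -/
theorem ode_sol {E : Type*} [NormedAddCommGroup E] [NormedSpace ℝ E] [CompleteSpace E]
    (A : E →L[ℝ] E) (G : ℝ → E) (hode : ∀ t, HasDerivAt G (A (G t)) t) (t : ℝ) :
    G t = exp (t • A) (G 0) := by
  set u : ℝ → E := fun s => exp ((-s) • A) (G s) with hu
  have hconst : ∀ s : ℝ, HasDerivAt u 0 s := by
    intro s
    have h1 : HasDerivAt (fun s : ℝ => exp ((-s) • A)) (-(exp ((-s) • A) * A)) s := by
      have := HasDerivAt.scomp s (hasDerivAt_exp_smul_const (𝕂 := ℝ) A (-s)) (hasDerivAt_neg s)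
      simpa [Function.comp_def, neg_smul, mul_comm] using this
    have h2 := h1.clm_apply (hode s)
    have hcomm : (exp ((-s) • A) * A) (G s) = exp ((-s) • A) (A (G s)) := rfl
    simpa [hu, neg_smul, hcomm] using h2
  have : u t = u 0 := by
    apply is_const_of_deriv_eq_zero (fun s => (hconst s).differentiableAt)
    intro s; exact (hconst s).deriv
  have h0 : u 0 = G 0 := by simp [hu]
  have hinv : exp (t • A) (u t) = G t := by
    rw [hu]
    have : exp (t • A) * exp ((-t) • A) = 1 := by
      have hcom : Commute (t • A) ((-t) • A) := by
        rw [neg_smul]; exact (Commute.refl _).neg_right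
      letI : NormedAlgebra ℚ (E →L[ℝ] E) := NormedAlgebra.restrictScalars ℚ ℝ (E →L[ℝ] E)
      rw [← exp_add_of_commute hcom]
      simp
    calc exp (t • A) (exp ((-t) • A) (G t))
        = (exp (t • A) * exp ((-t) • A)) (G t) := rfl
      _ = G t := by rw [this]; simp
  rw [← hinv, this, h0]

theorem sc_bounds {E : Type*} [NormedAddCommGroup E] [InnerProductSpace ℝ E] [CompleteSpace E]
    (F : E → ℝ) (g : E → E) (Hg : E → E →L[ℝ] E) (m : ℝ) (hm : 0 < m)
    (hg : ∀ z, HasGradientAt F (g z) z)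
    (hHg : ∀ z, HasFDerivAt g (Hg z) z)
    (hsc : ∀ z v, m * ‖v‖ ^ 2 ≤ (inner ℝ v (Hg z v) : ℝ))
    (ys yt : E) (hys : g ys = 0) :
    m * ‖yt - ys‖ ^ 2 ≤ (inner ℝ (yt - ys) (g yt) : ℝ) ∧
    0 ≤ F yt - F ys ∧ F yt - F ys ≤ (inner ℝ (yt - ys) (g yt) : ℝ) := by
  set v : E := yt - ys with hv
  have hpath : ∀ s : ℝ, HasDerivAt (fun s : ℝ => ys + s • v) v s := by
    intro s
    simpa using ((hasDerivAt_id s).smul_const v).const_add ys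
  set φ : ℝ → ℝ := fun s => (inner ℝ v (g (ys + s • v)) : ℝ) with hφdef
  have hφ : ∀ s : ℝ, HasDerivAt φ (inner ℝ v (Hg (ys + s • v) v) : ℝ) s := by
    intro s
    have h1 : HasDerivAt (fun s : ℝ => g (ys + s • v)) (Hg (ys + s • v) v) s :=
      (hHg (ys + s • v)).comp_hasDerivAt s (hpath s)
    simpa using (hasDerivAt_const s v).inner ℝ h1
  have hφmono : Monotone φ := by
    apply monotone_of_deriv_nonneg (fun s => (hφ s).differentiableAt)
    intro s
    rw [(hφ s).deriv]
    exact le_trans (by positivity) (hsc _ v)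
  have hφ0 : φ 0 = 0 := by simp [hφdef, hys]
  have hφ1 : φ 1 = (inner ℝ v (g yt) : ℝ) := by
    have h1 : ys + v = yt := by rw [hv]; abel
    simp [hφdef, h1]
  -- (i)
  have key1 : m * ‖v‖ ^ 2 ≤ (inner ℝ v (g yt) : ℝ) := by
    set K : ℝ := m * ‖v‖ ^ 2 with hK
    have hψ : Monotone (fun s : ℝ => φ s - s * K) := by
      apply monotone_of_deriv_nonneg
      · exact fun s => ((hφ s).differentiableAt).sub ((differentiableAt_id.mul_const K))
      · intro s
        have hd : HasDerivAt (fun s : ℝ => φ s - s * K)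
            ((inner ℝ v (Hg (ys + s • v) v) : ℝ) - K) s :=
          (hφ s).sub (by simpa using (hasDerivAt_id s).mul_const K)
        rw [hd.deriv]
        simp only [sub_nonneg]
        exact hsc _ v
    have := hψ (by norm_num : (0:ℝ) ≤ 1)
    simp only [hφ0, hφ1, zero_mul, sub_zero, one_mul] at this
    linarith
  -- χ
  set χ : ℝ → ℝ := fun s => F (ys + s • v) with hχdef
  have hχ : ∀ s : ℝ, HasDerivAt χ (φ s) s := by
    intro s
    have h1 : HasDerivAt χ
        ((InnerProductSpace.toDual ℝ E (g (ys + s • v))) v) s :=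
      ((hg (ys + s • v)).hasFDerivAt).comp_hasDerivAt s (hpath s)
    have : ((InnerProductSpace.toDual ℝ E (g (ys + s • v))) v) = φ s := by
      rw [InnerProductSpace.toDual_apply_apply, hφdef]
      exact real_inner_comm _ _
    rwa [this] at h1
  have hχ0 : χ 0 = F ys := by simp [hχdef]
  have hχ1 : χ 1 = F yt := by
    have h1 : ys + v = yt := by rw [hv]; abel
    simp [hχdef, h1]
  have hχmono : MonotoneOn χ (Set.Icc 0 1) := by
    apply monotoneOn_of_deriv_nonneg (convex_Icc 0 1)
    · exact (fun s _ => ((hχ s).differentiableAt.continuousAt.continuousWithinAt))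
    · exact fun s _ => (hχ s).differentiableAt.differentiableWithinAt
    · intro s hs
      rw [(hχ s).deriv]
      rw [interior_Icc] at hs
      calc (0:ℝ) = φ 0 := hφ0.symm
        _ ≤ φ s := hφmono hs.1.le
  have key2 : 0 ≤ F yt - F ys := by
    have := hχmono (Set.mem_Icc.2 ⟨le_refl 0, zero_le_one⟩)
      (Set.mem_Icc.2 ⟨zero_le_one, le_refl 1⟩) zero_le_one
    rw [hχ0, hχ1] at this; linarith
  have key3 : F yt - F ys ≤ (inner ℝ v (g yt) : ℝ) := by
    set B : ℝ := (inner ℝ v (g yt) : ℝ) with hB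
    have hω : MonotoneOn (fun s : ℝ => s * B - χ s) (Set.Icc 0 1) := by
      apply monotoneOn_of_deriv_nonneg (convex_Icc 0 1)
      · exact Continuous.continuousOn
          ((continuous_id.mul continuous_const).sub
            (Differentiable.continuous (fun s => (hχ s).differentiableAt)))
      · intro s _
        exact ((differentiableAt_id.mul_const B).sub
          (hχ s).differentiableAt).differentiableWithinAt
      · intro s hs
        rw [interior_Icc] at hs
        have hd : HasDerivAt (fun s : ℝ => s * B - χ s) (B - φ s) s :=
          HasDerivAt.sub (by simpa using (hasDerivAt_id s).mul_const B) (hχ s)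
        rw [hd.deriv]
        simp only [sub_nonneg]
        rw [← hφ1]
        exact hφmono hs.2.le
    have := hω (Set.mem_Icc.2 ⟨le_refl 0, zero_le_one⟩)
      (Set.mem_Icc.2 ⟨zero_le_one, le_refl 1⟩) zero_le_one
    simp only [zero_mul, one_mul, hχ0, hχ1] at this
    linarith
  exact ⟨key1, key2, key3⟩

/-- Main theorem (Theorems 1–2 of the paper).  Let `f` be smooth and uniformly `m`-strongly
convex in `y`, with minimizing path `y*(t)` (`∇_y f(y*(t),t) = 0`).  If along the
trajectory `y(t)` the stacked gradient vector `G = col(g, ġ, …, g^{(k−1)})`,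
`g(t) = ∇_y f(y(t),t)`, evolves as `Ġ = H G` with `H` Hurwitz and
`‖e^{Ht}‖ ≤ c e^{−αt}` (`c, α > 0`), then `‖y(t) − y*(t)‖ ≤ C e^{−αt}` with
`C = (c²/m² ∑_{j<k} ‖g^{(j)}(0)‖²)^{1/2}` and
`0 ≤ f(y(t),t) − f(y*(t),t) ≤ m C² e^{−2αt}` for all `t ≥ 0`. -/
theorem implicit_planning_tracking_convergence {n k : ℕ} (hk : 1 ≤ k)
    (f : EuclideanSpace ℝ (Fin n) × ℝ → ℝ) (hf : ContDiff ℝ (⊤ : ℕ∞) f) (m : ℝ) (hm : 0 < m)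
    (grad : EuclideanSpace ℝ (Fin n) → ℝ → EuclideanSpace ℝ (Fin n))
    (hgrad : ∀ z t, grad z t = gradient (fun w => f (w, t)) z)
    (Hess : EuclideanSpace ℝ (Fin n) → ℝ →
      (EuclideanSpace ℝ (Fin n) →L[ℝ] EuclideanSpace ℝ (Fin n)))
    (hHess : ∀ z t, Hess z t = fderiv ℝ (fun w => grad w t) z)
    -- uniform strong convexity: `∇_{yy} f(y,t) ⪰ m·I`
    (hsc : ∀ z t (v : EuclideanSpace ℝ (Fin n)), m * ‖v‖ ^ 2 ≤ (inner ℝ v (Hess z t v) : ℝ))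
    -- the minimizing path
    (ystar : ℝ → EuclideanSpace ℝ (Fin n)) (hstar : ∀ t, grad (ystar t) t = 0)
    -- the trajectory and the stacked gradient vector
    (y : ℝ → EuclideanSpace ℝ (Fin n))
    (G : ℝ → EuclideanSpace ℝ (Fin k × Fin n))
    (hG : ∀ (t : ℝ) (p : Fin k × Fin n),
      G t p = iteratedDeriv (p.1 : ℕ) (fun s => grad (y s) s) t p.2)
    -- `Ġ = H G` with `H` Hurwitz
    (H : Matrix (Fin k × Fin n) (Fin k × Fin n) ℝ)
    (hHurwitz : ∀ μ : ℂ, ((H.map Complex.ofReal).charpoly).IsRoot μ → μ.re < 0)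
    (hode : ∀ t : ℝ, HasDerivAt G (Matrix.toEuclideanCLM (𝕜 := ℝ) H (G t)) t)
    -- the exponential bound `‖e^{Ht}‖ ≤ c e^{−αt}`
    (c α : ℝ) (hc : 0 < c) (hα : 0 < α)
    (hexp : ∀ t : ℝ, 0 ≤ t →
      ‖NormedSpace.exp (t • Matrix.toEuclideanCLM (𝕜 := ℝ) H)‖ ≤ c * Real.exp (-α * t))
    (C : ℝ)
    (hC : C = Real.sqrt (c ^ 2 / m ^ 2 *
      ∑ j ∈ Finset.range k, ‖iteratedDeriv j (fun s => grad (y s) s) 0‖ ^ 2)) :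
    ∀ t : ℝ, 0 ≤ t →
      ‖y t - ystar t‖ ≤ C * Real.exp (-α * t) ∧
      0 ≤ f (y t, t) - f (ystar t, t) ∧
      f (y t, t) - f (ystar t, t) ≤ m * C ^ 2 * Real.exp (-2 * α * t) := by
  let E := EuclideanSpace ℝ (Fin n)
  -- smoothness of the sections
  have hfw : ∀ t : ℝ, ContDiff ℝ (⊤ : ℕ∞) (fun w : E => f (w, t)) := fun t =>
    hf.comp ((contDiff_id).prodMk (contDiff_const (c := t)))
  have hgdiff : ∀ t : ℝ, Differentiable ℝ (fun w : E => grad w t) := by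
    intro t
    have heq : (fun w : E => grad w t) =
        fun w => (InnerProductSpace.toDual ℝ E).symm (fderiv ℝ (fun w : E => f (w, t)) w) := by
      funext w; rw [hgrad]; rfl
    rw [heq]
    exact (((InnerProductSpace.toDual ℝ E).symm.contDiff.comp
      ((hfw t).fderiv_right (m := (⊤ : ℕ∞)) (by simp))).differentiable (by simp))
  have hHg : ∀ t (z : E), HasFDerivAt (fun w : E => grad w t) (Hess z t) z := by
    intro t z; rw [hHess]; exact ((hgdiff t) z).hasFDerivAt
  have hgradAt : ∀ t (z : E), HasGradientAt (fun w : E => f (w, t)) (grad z t) z := by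
    intro t z; rw [hgrad]; exact (((hfw t).differentiable (by simp)) _).hasGradientAt
  -- solve the ODE
  set A := Matrix.toEuclideanCLM (𝕜 := ℝ) H with hA
  have hsol : ∀ t : ℝ, G t = NormedSpace.exp (t • A) (G 0) := ode_sol A G hode
  -- norm of G 0
  have hnormsq : ∀ (ι : Type) (_ : Fintype ι) (x : EuclideanSpace ℝ ι),
      ‖x‖ ^ 2 = ∑ i, ‖x i‖ ^ 2 := by
    intro ι _ x
    rw [EuclideanSpace.norm_eq, Real.sq_sqrt]
    positivity
  have hGsq : ∀ t : ℝ, ‖G t‖ ^ 2 = ∑ j : Fin k, ∑ i : Fin n, ‖G t (j, i)‖ ^ 2 := by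
    intro t
    rw [hnormsq _ _ (G t)]
    exact Fintype.sum_prod_type (f := fun p : Fin k × Fin n => ‖G t p‖ ^ 2)
  have hG0 : ‖G 0‖ ^ 2 =
      ∑ j ∈ Finset.range k, ‖iteratedDeriv j (fun s => grad (y s) s) 0‖ ^ 2 := by
    rw [hGsq 0, ← Fin.sum_univ_eq_sum_range (fun j => ‖iteratedDeriv j (fun s => grad (y s) s) 0‖ ^ 2) k]
    refine Finset.sum_congr rfl (fun j _ => ?_)
    rw [hnormsq _ _ (iteratedDeriv (j : ℕ) (fun s => grad (y s) s) 0)]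
    exact Finset.sum_congr rfl (fun i _ => by rw [hG 0 (j, i)])
  -- gradient norm dominated by ‖G t‖
  have hgG : ∀ t : ℝ, ‖grad (y t) t‖ ≤ ‖G t‖ := by
    intro t
    have h1 : ‖grad (y t) t‖ ^ 2 ≤ ‖G t‖ ^ 2 := by
      rw [hGsq t, hnormsq _ _ (grad (y t) t)]
      have hterm : ∑ i : Fin n, ‖grad (y t) t i‖ ^ 2 =
          ∑ i : Fin n, ‖G t (⟨0, hk⟩, i)‖ ^ 2 := by
        refine Finset.sum_congr rfl (fun i _ => ?_)
        rw [hG t (⟨0, hk⟩, i)]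
        simp [iteratedDeriv_zero]
      rw [hterm]
      exact Finset.single_le_sum
        (f := fun j : Fin k => ∑ i : Fin n, ‖G t (j, i)‖ ^ 2)
        (fun j _ => by positivity) (Finset.mem_univ (⟨0, hk⟩ : Fin k))
    nlinarith [norm_nonneg (grad (y t) t), norm_nonneg (G t)]
  -- exponential decay of ‖G t‖
  have hGdecay : ∀ t : ℝ, 0 ≤ t → ‖G t‖ ≤ c * Real.exp (-α * t) * ‖G 0‖ := by
    intro t ht
    rw [hsol t]
    calc ‖NormedSpace.exp (t • A) (G 0)‖
        ≤ ‖NormedSpace.exp (t • A)‖ * ‖G 0‖ := ContinuousLinearMap.le_opNorm _ _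
      _ ≤ c * Real.exp (-α * t) * ‖G 0‖ :=
          mul_le_mul_of_nonneg_right (hexp t ht) (norm_nonneg _)
  -- value of C
  have hCval : C = c / m * ‖G 0‖ := by
    rw [hC, ← hG0]
    have : c ^ 2 / m ^ 2 * ‖G 0‖ ^ 2 = (c / m * ‖G 0‖) ^ 2 := by ring
    rw [this, Real.sqrt_sq (by positivity)]
  -- main argument at each time t
  intro t ht
  obtain ⟨key1, key2, key3⟩ :=
    sc_bounds (fun w : E => f (w, t)) (fun z => grad z t) (fun z => Hess z t) m hm
      (hgradAt t) (hHg t) (fun z v => hsc z t v) (ystar t) (y t) (hstar t)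
  set v : E := y t - ystar t with hv
  set gt : E := grad (y t) t with hgt
  have hCS : (inner ℝ v gt : ℝ) ≤ ‖v‖ * ‖gt‖ := real_inner_le_norm v gt
  have hvle : m * ‖v‖ ≤ ‖gt‖ := by
    rcases eq_or_lt_of_le (norm_nonneg v) with hz | hz
    · rw [← hz, mul_zero]; exact norm_nonneg gt
    · nlinarith
  have hgb : ‖gt‖ ≤ c * Real.exp (-α * t) * ‖G 0‖ := (hgG t).trans (hGdecay t ht)
  have hexp2 : Real.exp (-α * t) * Real.exp (-α * t) = Real.exp (-2 * α * t) := by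
    rw [← Real.exp_add]; ring_nf
  have hepos : 0 < Real.exp (-α * t) := Real.exp_pos _
  refine ⟨?_, key2, ?_⟩
  · rw [hCval]
    have h1 : ‖v‖ ≤ ‖gt‖ / m := (le_div_iff₀' hm).mpr hvle
    calc ‖v‖ ≤ ‖gt‖ / m := h1
      _ ≤ c * Real.exp (-α * t) * ‖G 0‖ / m := by
          gcongr
      _ = c / m * ‖G 0‖ * Real.exp (-α * t) := by ring
  · have hΔ : f (y t, t) - f (ystar t, t) ≤ ‖v‖ * ‖gt‖ := key3.trans hCS
    have hC2 : m * C ^ 2 * Real.exp (-2 * α * t) =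
        c ^ 2 / m * ‖G 0‖ ^ 2 * Real.exp (-2 * α * t) := by
      rw [hCval]; field_simp
    rw [hC2]
    have hgnn : (0:ℝ) ≤ ‖gt‖ := norm_nonneg _
    have hG0nn : (0:ℝ) ≤ ‖G 0‖ := norm_nonneg _
    have hgsq : ‖gt‖ ^ 2 ≤ (c * Real.exp (-α * t) * ‖G 0‖) ^ 2 := by
      apply pow_le_pow_left₀ hgnn hgb
    have hvg : ‖v‖ * ‖gt‖ ≤ ‖gt‖ ^ 2 / m := by
      rw [le_div_iff₀ hm]
      calc ‖v‖ * ‖gt‖ * m = (m * ‖v‖) * ‖gt‖ := by ring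
        _ ≤ ‖gt‖ * ‖gt‖ := mul_le_mul_of_nonneg_right hvle hgnn
        _ = ‖gt‖ ^ 2 := by ring
    calc f (y t, t) - f (ystar t, t) ≤ ‖v‖ * ‖gt‖ := hΔ
      _ ≤ ‖gt‖ ^ 2 / m := hvg
      _ ≤ (c * Real.exp (-α * t) * ‖G 0‖) ^ 2 / m := by gcongr
      _ = c ^ 2 / m * ‖G 0‖ ^ 2 * Real.exp (-2 * α * t) := by
          rw [← hexp2]; field_simp
end
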